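/- Completeness of LP_CS: for every constant specification CS for LP and every formula A, if A is not derivable in the Hilbert system LP_CS then there exists a Fitting model M for LP_CS and a world w in M such that M,w ⊮ A. -/

import Mathlib

namespace JustificationLogic

/-- Justification terms: constants, variables, application, sum, and proof checker `!`. -/
inductive Term : Type
  | const : ℕ → Term
  | var : ℕ → Term
  | app : Term → Term → Term
  | sum : Term → Term → Term
  | bang : Term → Term
  deriving DecidableEq

/-- Formulas of justification logic: atoms, negation, implication, and `t : A`. -/
inductive Formula : Type
  | atom : ℕ → Formula
  | neg : Formula → Formula
  | impl : Formula → Formula → Formula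
  | just : Term → Formula → Formula
  deriving DecidableEq

/-- Disjunction, defined classically: `A ∨ B := ¬A → B`. -/
def Formula.or (A B : Formula) : Formula := (Formula.neg A).impl B

/-- Falsum, defined as the negation of a propositional tautology. -/
def Formula.falsum : Formula := Formula.neg ((Formula.atom 0).impl (Formula.atom 0))

/-- Number of symbols of a term. -/
def Term.size : Term → ℕ
  | .const _ => 1
  | .var _ => 1
  | .app s t => s.size + t.size + 1
  | .sum s t => s.size + t.size + 1
  | .bang t => t.size + 1

/-- Number of symbols of a formula. -/
def Formula.size : Formula → ℕ
  | .atom _ => 1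
  | .neg A => A.size + 1
  | .impl A B => A.size + B.size + 1
  | .just t A => t.size + A.size + 1

/-- An explicit numerical code for terms (an injective Gödel numbering). -/
def Term.code : Term → ℕ
  | .const n => Nat.pair 0 n
  | .var n => Nat.pair 1 n
  | .app s t => Nat.pair 2 (Nat.pair s.code t.code)
  | .sum s t => Nat.pair 3 (Nat.pair s.code t.code)
  | .bang t => Nat.pair 4 t.code

/-- An explicit numerical code for formulas (an injective Gödel numbering). -/
def Formula.code : Formula → ℕ
  | .atom n => Nat.pair 0 n
  | .neg A => Nat.pair 1 A.code
  | .impl A B => Nat.pair 2 (Nat.pair A.code B.code)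
  | .just t A => Nat.pair 3 (Nat.pair t.code A.code)

/-- Substitution of terms for term variables. -/
def Term.subst (σ : ℕ → Term) : Term → Term
  | .const n => .const n
  | .var n => σ n
  | .app s t => .app (s.subst σ) (t.subst σ)
  | .sum s t => .sum (s.subst σ) (t.subst σ)
  | .bang t => .bang (t.subst σ)

/-- Simultaneous substitution of terms for term variables and formulas for atoms. -/
def Formula.subst (σ : ℕ → Term) (τ : ℕ → Formula) : Formula → Formula
  | .atom n => τ n
  | .neg A => .neg (A.subst σ τ)
  | .impl A B => .impl (A.subst σ τ) (B.subst σ τ)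
  | .just t A => .just (t.subst σ) (A.subst σ τ)

/-- `towerT c n = !ⁿc`. -/
def towerT (c : Term) : ℕ → Term
  | 0 => c
  | n + 1 => Term.bang (towerT c n)

/-- `towerF c A n = !ⁿ⁻¹c : ⋯ : !c : c : A` (and `A` for `n = 0`), so that
`(towerT c n) : (towerF c A n)` is the `n`-th formula produced by the rule (AN!). -/
def towerF (c : Term) (A : Formula) : ℕ → Formula
  | 0 => A
  | n + 1 => Formula.just (towerT c n) (towerF c A n)

/-- The axioms of the justification logics considered, with switches `hd`, `ht`, `h4`
for the axioms (jd), (jt), (j4).  The propositional part (A1) is given by three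
standard Hilbert-style schemes axiomatizing classical propositional logic. -/
inductive Ax (hd ht h4 : Bool) : Formula → Prop
  | k (A B : Formula) : Ax hd ht h4 (A.impl (B.impl A))
  | s (A B C : Formula) :
      Ax hd ht h4 ((A.impl (B.impl C)).impl ((A.impl B).impl (A.impl C)))
  | dn (A B : Formula) :
      Ax hd ht h4 (((A.neg).impl (B.neg)).impl (B.impl A))
  | a2 (t s : Term) (A B : Formula) :
      Ax hd ht h4 ((Formula.just t (A.impl B)).impl
        ((Formula.just s A).impl (Formula.just (Term.app t s) B)))
  | a3 (t s : Term) (A : Formula) :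
      Ax hd ht h4 (((Formula.just t A).or (Formula.just s A)).impl
        (Formula.just (Term.sum t s) A))
  | jd (t : Term) : hd = true →
      Ax hd ht h4 ((Formula.just t Formula.falsum).impl Formula.falsum)
  | jt (t : Term) (A : Formula) : ht = true →
      Ax hd ht h4 ((Formula.just t A).impl A)
  | j4 (t : Term) (A : Formula) : h4 = true →
      Ax hd ht h4 ((Formula.just t A).impl
        (Formula.just (Term.bang t) (Formula.just t A)))

/-- Axioms of the respective logics. -/
def AxJ : Formula → Prop := Ax false false false
def AxJT : Formula → Prop := Ax false true false
def AxJD : Formula → Prop := Ax true false false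
def AxJ4 : Formula → Prop := Ax false false true
def AxJD4 : Formula → Prop := Ax true false true
def AxLP : Formula → Prop := Ax false true true

/-- `CS` is a constant specification for the logic with axioms `Axm`:
every member of `CS` is of the form `c : A` with `c` a constant and `A` an axiom. -/
def ConstSpec (Axm : Formula → Prop) (CS : Set Formula) : Prop :=
  ∀ F ∈ CS, ∃ (c : ℕ) (A : Formula), F = Formula.just (Term.const c) A ∧ Axm A

/-- `CS` is axiomatically appropriate for axioms `Axm`:
for every axiom `A` there is a constant `c` with `c : A ∈ CS`. -/
def AxApprop (Axm : Formula → Prop) (CS : Set Formula) : Prop :=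
  ∀ A : Formula, Axm A → ∃ c : ℕ, Formula.just (Term.const c) A ∈ CS

/-- `CS` is schematic: the set of axioms justified by a given constant consists of
axiom schemes, i.e. it is closed under simultaneous substitution of terms for term
variables and formulas for atomic propositions. -/
def Schematic (CS : Set Formula) : Prop :=
  ∀ (c : ℕ) (A : Formula), Formula.just (Term.const c) A ∈ CS →
    ∀ (σ : ℕ → Term) (τ : ℕ → Formula),
      Formula.just (Term.const c) (A.subst σ τ) ∈ CS

/-- `CS` is decidable: some computable function decides membership in `CS`
(via the explicit Gödel numbering of formulas). -/
def DecidableCS (CS : Set Formula) : Prop :=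
  ∃ C : ℕ → Bool, Computable C ∧ ∀ F : Formula, F ∈ CS ↔ C F.code = true

/-- Hilbert-style derivability with the iterated axiom necessitation rule (AN!):
from `c : A ∈ CS` infer `!ⁿc : !ⁿ⁻¹c : ⋯ : !c : c : A` for every `n ≥ 0`. -/
inductive DerivB (Axm : Formula → Prop) (CS : Set Formula) : Formula → Prop
  | ax {A : Formula} : Axm A → DerivB Axm CS A
  | mp {A B : Formula} : DerivB Axm CS (A.impl B) → DerivB Axm CS A → DerivB Axm CS B
  | an (c : ℕ) (A : Formula) (n : ℕ) :
      Formula.just (Term.const c) A ∈ CS →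
      DerivB Axm CS (Formula.just (towerT (Term.const c) n) (towerF (Term.const c) A n))

/-- Hilbert-style derivability with the simple axiom necessitation rule (AN):
from `c : A ∈ CS` infer `c : A`. -/
inductive DerivS (Axm : Formula → Prop) (CS : Set Formula) : Formula → Prop
  | ax {A : Formula} : Axm A → DerivS Axm CS A
  | mp {A B : Formula} : DerivS Axm CS (A.impl B) → DerivS Axm CS A → DerivS Axm CS B
  | an (c : ℕ) (A : Formula) :
      Formula.just (Term.const c) A ∈ CS →
      DerivS Axm CS (Formula.just (Term.const c) A)

/-- A structure for Fitting models: a nonempty set of worlds, an accessibility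
relation, an evidence relation and a valuation. -/
structure Model : Type 1 where
  World : Type
  nonempty : Nonempty World
  R : World → World → Prop
  E : Term → Formula → World → Prop
  val : ℕ → World → Prop

/-- The satisfaction relation `M, w ⊩ A`. -/
def Sat (M : Model) : Formula → M.World → Prop
  | .atom n, w => M.val n w
  | .neg A, w => ¬ Sat M A w
  | .impl A B, w => Sat M A w → Sat M B w
  | .just t A, w => M.E t A w ∧ ∀ v : M.World, M.R w v → Sat M A v

/-- The evidence relation of a model, as a set of triples. -/
def EvSet (M : Model) : Set (Term × Formula × M.World) :=
  {x | M.E x.1 x.2.1 x.2.2}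

/-- The graph of the valuation: the set `{(w, p) | w ∈ ν(p)}`. -/
def ValSet (M : Model) : Set (M.World × ℕ) :=
  {p | M.val p.2 p.1}

/-- Seriality of a relation: every world has a successor. -/
def Serial {W : Type} (R : W → W → Prop) : Prop := ∀ w : W, ∃ v : W, R w v

/-- Admissible evidence relation for the logics without the (j4) axiom:
closure under sum and application, and the constant specification condition
with iterated `!`. -/
def AdmissibleBang (CS : Set Formula) {W : Type}
    (E : Set (Term × Formula × W)) : Prop :=
  (∀ (s t : Term) (A : Formula) (w : W),
      ((s, A, w) ∈ E ∨ (t, A, w) ∈ E) → (Term.sum s t, A, w) ∈ E) ∧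
  (∀ (s t : Term) (A B : Formula) (w : W),
      (s, A.impl B, w) ∈ E → (t, A, w) ∈ E → (Term.app s t, B, w) ∈ E) ∧
  (∀ (c : ℕ) (A : Formula) (w : W) (n : ℕ),
      Formula.just (Term.const c) A ∈ CS →
      (towerT (Term.const c) n, towerF (Term.const c) A n, w) ∈ E)

/-- Admissible evidence relation for the logics with the (j4) axiom:
closure under sum and application, the simple constant specification condition,
closure under `!`, and monotonicity along the accessibility relation. -/
def AdmissibleJ4 (CS : Set Formula) {W : Type} (R : W → W → Prop)
    (E : Set (Term × Formula × W)) : Prop :=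
  (∀ (s t : Term) (A : Formula) (w : W),
      ((s, A, w) ∈ E ∨ (t, A, w) ∈ E) → (Term.sum s t, A, w) ∈ E) ∧
  (∀ (s t : Term) (A B : Formula) (w : W),
      (s, A.impl B, w) ∈ E → (t, A, w) ∈ E → (Term.app s t, B, w) ∈ E) ∧
  (∀ (c : ℕ) (A : Formula) (w : W),
      Formula.just (Term.const c) A ∈ CS → (Term.const c, A, w) ∈ E) ∧
  (∀ (t : Term) (A : Formula) (w : W),
      (t, A, w) ∈ E → (Term.bang t, Formula.just t A, w) ∈ E) ∧
  (∀ (t : Term) (A : Formula) (w v : W),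
      (t, A, w) ∈ E → R w v → (t, A, v) ∈ E)

/-- `M` is a Fitting model for `J_CS`. -/
def IsModelJ (CS : Set Formula) (M : Model) : Prop :=
  AdmissibleBang CS (EvSet M)

/-- `M` is a Fitting model for `JT_CS`: additionally `R` is reflexive. -/
def IsModelJT (CS : Set Formula) (M : Model) : Prop :=
  Reflexive M.R ∧ AdmissibleBang CS (EvSet M)

/-- `M` is a Fitting model for `JD_CS`: additionally `R` is serial. -/
def IsModelJD (CS : Set Formula) (M : Model) : Prop :=
  Serial M.R ∧ AdmissibleBang CS (EvSet M)

/-- `M` is a Fitting model for `J4_CS`: `R` is transitive. -/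
def IsModelJ4 (CS : Set Formula) (M : Model) : Prop :=
  Transitive M.R ∧ AdmissibleJ4 CS M.R (EvSet M)

/-- `M` is a Fitting model for `JD4_CS`: `R` is serial and transitive. -/
def IsModelJD4 (CS : Set Formula) (M : Model) : Prop :=
  Serial M.R ∧ Transitive M.R ∧ AdmissibleJ4 CS M.R (EvSet M)

/-- `M` is a Fitting model for `LP_CS`: `R` is reflexive and transitive. -/
def IsModelLP (CS : Set Formula) (M : Model) : Prop :=
  Reflexive M.R ∧ Transitive M.R ∧ AdmissibleJ4 CS M.R (EvSet M)

/-- `B` is a base for the evidence relation of `M`, and that evidence relation is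
minimal (least) among the admissible ones (non-(j4) version) containing `B`. -/
def MinBaseBang (CS : Set Formula) (M : Model)
    (B : Set (Term × Formula × M.World)) : Prop :=
  B ⊆ EvSet M ∧
  ∀ E' : Set (Term × Formula × M.World),
    AdmissibleBang CS E' → B ⊆ E' → EvSet M ⊆ E'

/-- `B` is a base for the evidence relation of `M`, and that evidence relation is
minimal (least) among the admissible ones ((j4) version) containing `B`. -/
def MinBaseJ4 (CS : Set Formula) (M : Model)
    (B : Set (Term × Formula × M.World)) : Prop :=
  B ⊆ EvSet M ∧
  ∀ E' : Set (Term × Formula × M.World),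
    AdmissibleJ4 CS M.R E' → B ⊆ E' → EvSet M ⊆ E'

/-- `M` is finitary (non-(j4) version): finitely many worlds, the evidence relation
is the minimal admissible one over some finite base, and the valuation has finite graph. -/
def FinitaryBang (CS : Set Formula) (M : Model) : Prop :=
  Finite M.World ∧
  (∃ B : Set (Term × Formula × M.World), B.Finite ∧ MinBaseBang CS M B) ∧
  (ValSet M).Finite

/-- `M` is finitary ((j4) version): finitely many worlds, the evidence relation
is the minimal admissible one over some finite base, and the valuation has finite graph. -/
def FinitaryJ4 (CS : Set Formula) (M : Model) : Prop :=
  Finite M.World ∧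
  (∃ B : Set (Term × Formula × M.World), B.Finite ∧ MinBaseJ4 CS M B) ∧
  (ValSet M).Finite

/-! Canonical model: the worlds are the maximal consistent sets, `t` is evidence for `B`
at `w` iff `t : B ∈ w`, and `w R v` iff `B ∈ v` whenever `t : B ∈ w`; a non-derivable `A`
fails at any maximal consistent extension of `{¬A}`. The truth lemma needs no axiom beyond
propositional logic; (jt) makes `R` reflexive, and (j4) makes it transitive and the
evidence closed under `!` and monotone along `R`. -/

open Formula

inductive DerivFrom (hd ht h4 : Bool) (CS G : Set Formula) : Formula → Prop
  | ax {A : Formula} : Ax hd ht h4 A → DerivFrom hd ht h4 CS G A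
  | hyp {A : Formula} : A ∈ G → DerivFrom hd ht h4 CS G A
  | mp {A B : Formula} : DerivFrom hd ht h4 CS G (A.impl B) → DerivFrom hd ht h4 CS G A →
      DerivFrom hd ht h4 CS G B
  | an (c : ℕ) (A : Formula) :
      just (.const c) A ∈ CS → DerivFrom hd ht h4 CS G (just (.const c) A)

def Consistent (hd ht h4 : Bool) (CS G : Set Formula) : Prop :=
  ¬ DerivFrom hd ht h4 CS G falsum

abbrev MaximalConsistent (hd ht h4 : Bool) (CS w : Set Formula) : Prop :=
  Maximal (Consistent hd ht h4 CS) w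

namespace DerivFrom

variable {hd ht h4 : Bool} {CS G D : Set Formula} {A B : Formula}

theorem mono (h : DerivFrom hd ht h4 CS G A) (hG : G ⊆ D) : DerivFrom hd ht h4 CS D A := by
  induction h with
  | ax h => exact .ax h
  | hyp h => exact .hyp (hG h)
  | mp _ _ ih₁ ih₂ => exact .mp ih₁ ih₂
  | an c A h => exact .an c A h

theorem derivS_of_empty (h : DerivFrom hd ht h4 CS ∅ A) : DerivS (Ax hd ht h4) CS A := by
  induction h with
  | ax h => exact .ax h
  | hyp h => exact absurd h (Set.notMem_empty _)
  | mp _ _ ih₁ ih₂ => exact .mp ih₁ ih₂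
  | an c A h => exact .an c A h

theorem exists_finite (h : DerivFrom hd ht h4 CS G A) :
    ∃ G₀ ⊆ G, G₀.Finite ∧ DerivFrom hd ht h4 CS G₀ A := by
  induction h with
  | ax h => exact ⟨∅, Set.empty_subset _, Set.finite_empty, .ax h⟩
  | hyp h => exact ⟨{_}, Set.singleton_subset_iff.2 h, Set.finite_singleton _, .hyp rfl⟩
  | mp _ _ ih₁ ih₂ =>
    obtain ⟨G₁, hG₁, hfin₁, h₁⟩ := ih₁
    obtain ⟨G₂, hG₂, hfin₂, h₂⟩ := ih₂
    exact ⟨G₁ ∪ G₂, Set.union_subset hG₁ hG₂, hfin₁.union hfin₂,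
      (h₁.mono Set.subset_union_left).mp (h₂.mono Set.subset_union_right)⟩
  | an c A h => exact ⟨∅, Set.empty_subset _, Set.finite_empty, .an c A h⟩

theorem imp_self : DerivFrom hd ht h4 CS G (A.impl A) :=
  ((ax (.s A (A.impl A) A)).mp (ax (.k A (A.impl A)))).mp (ax (.k A A))

theorem imp_intro (h : DerivFrom hd ht h4 CS G B) : DerivFrom hd ht h4 CS G (A.impl B) :=
  (ax (.k B A)).mp h

theorem deduction (h : DerivFrom hd ht h4 CS (insert A G) B) :
    DerivFrom hd ht h4 CS G (A.impl B) := by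
  induction h with
  | ax h => exact imp_intro (ax h)
  | hyp h =>
    rcases h with rfl | h
    · exact imp_self
    · exact imp_intro (hyp h)
  | mp _ _ ih₁ ih₂ => exact ((ax (.s A _ _)).mp ih₁).mp ih₂
  | an c A h => exact imp_intro (an c A h)

theorem hyp_insert : DerivFrom hd ht h4 CS (insert A G) A :=
  hyp (Set.mem_insert _ _)

theorem neg_imp : DerivFrom hd ht h4 CS G (A.neg.impl (A.impl B)) :=
  deduction <| (ax (.dn B A)).mp ((ax (.k A.neg B.neg)).mp hyp_insert)

theorem not_not_imp : DerivFrom hd ht h4 CS G (A.neg.neg.impl A) :=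
  deduction <| ((ax (.dn A (A.impl A))).mp (neg_imp.mp hyp_insert)).mp imp_self

theorem imp_falsum_imp_neg : DerivFrom hd ht h4 CS G ((A.impl falsum).impl A.neg) := by
  -- `falsum` is `¬(p₀ → p₀)`: (dn) turns `¬¬A → falsum` into `(p₀ → p₀) → ¬A`
  refine deduction <|
    ((ax (.dn A.neg ((atom 0).impl (atom 0)))).mp (deduction ?_)).mp imp_self
  exact (hyp (Set.mem_insert_of_mem _ (Set.mem_insert _ _))).mp (not_not_imp.mp hyp_insert)

end DerivFrom

open DerivFrom

section MaximalConsistent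

variable {hd ht h4 : Bool} {CS G w : Set Formula} {A B : Formula}

theorem consistent_singleton_neg (hA : ¬ DerivS (Ax hd ht h4) CS A) :
    Consistent hd ht h4 CS {A.neg} := fun h =>
  hA <| derivS_of_empty <|
    not_not_imp.mp (imp_falsum_imp_neg.mp (deduction (G := ∅) (by simpa using h)))

theorem exists_maximal_consistent_superset (hG : Consistent hd ht h4 CS G) :
    ∃ w, G ⊆ w ∧ MaximalConsistent hd ht h4 CS w :=
  zorn_subset_nonempty {D | Consistent hd ht h4 CS D} (fun c hc hchain hne =>
    ⟨⋃₀ c, fun hder => by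
      obtain ⟨G₀, hG₀, hfin, h⟩ := hder.exists_finite
      obtain ⟨D, hD, hG₀D⟩ :=
        hchain.directedOn.exists_mem_subset_of_finite_of_subset_sUnion hne hfin hG₀
      exact hc hD (h.mono hG₀D), fun _ => Set.subset_sUnion_of_mem⟩) G hG

theorem MaximalConsistent.mem_of_derivFrom (hw : MaximalConsistent hd ht h4 CS w)
    (h : DerivFrom hd ht h4 CS w A) : A ∈ w :=
  hw.mem_of_prop_insert fun hf => hw.1 ((deduction hf).mp h)

theorem MaximalConsistent.neg_mem_iff (hw : MaximalConsistent hd ht h4 CS w) :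
    A.neg ∈ w ↔ A ∉ w := by
  refine ⟨fun hn hA => hw.1 ((neg_imp.mp (hyp hn)).mp (hyp hA)), fun hA => ?_⟩
  have hincon : ¬ Consistent hd ht h4 CS (insert A w) := fun h => hA (hw.mem_of_prop_insert h)
  exact hw.mem_of_derivFrom (imp_falsum_imp_neg.mp (deduction (not_not.mp hincon)))

theorem MaximalConsistent.impl_mem_iff (hw : MaximalConsistent hd ht h4 CS w) :
    A.impl B ∈ w ↔ (A ∈ w → B ∈ w) := by
  refine ⟨fun h hA => hw.mem_of_derivFrom ((hyp h).mp (hyp hA)), fun h => ?_⟩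
  by_cases hA : A ∈ w
  · exact hw.mem_of_derivFrom (imp_intro (hyp (h hA)))
  · exact hw.mem_of_derivFrom (neg_imp.mp (hyp (hw.neg_mem_iff.2 hA)))

end MaximalConsistent

/-- The canonical model; the world `w₀` only witnesses nonemptiness. -/
def canonicalModel (hd ht h4 : Bool) (CS : Set Formula)
    (w₀ : {w : Set Formula // MaximalConsistent hd ht h4 CS w}) : Model where
  World := {w : Set Formula // MaximalConsistent hd ht h4 CS w}
  nonempty := ⟨w₀⟩
  R w v := ∀ (t : Term) (B : Formula), just t B ∈ w.1 → B ∈ v.1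
  E t B w := just t B ∈ w.1
  val n w := atom n ∈ w.1

section CanonicalModel

variable {hd ht h4 : Bool} {CS : Set Formula}
  {w₀ : {w : Set Formula // MaximalConsistent hd ht h4 CS w}}

theorem sat_canonicalModel_iff (A : Formula) (w : (canonicalModel hd ht h4 CS w₀).World) :
    Sat (canonicalModel hd ht h4 CS w₀) A w ↔ A ∈ w.1 := by
  induction A generalizing w with
  | atom n => exact Iff.rfl
  | neg A ih => simpa only [Sat, ih w] using w.2.neg_mem_iff.symm
  | impl A B ihA ihB => simpa only [Sat, ihA w, ihB w] using w.2.impl_mem_iff.symm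
  | just t A ih => exact ⟨And.left, fun h => ⟨h, fun v hv => (ih v).2 (hv t A h)⟩⟩

end CanonicalModel

theorem isModelLP_canonicalModel {CS : Set Formula}
    {w₀ : {w : Set Formula // MaximalConsistent false true true CS w}} :
    IsModelLP CS (canonicalModel false true true CS w₀) := by
  have j4_mem : ∀ t B (w : (canonicalModel false true true CS w₀).World), just t B ∈ w.1 →
      just (.bang t) (just t B) ∈ w.1 := fun t B w h =>
    w.2.mem_of_derivFrom ((ax (.j4 t B rfl)).mp (hyp h))
  refine ⟨fun w t B h => w.2.mem_of_derivFrom ((ax (.jt t B rfl)).mp (hyp h)),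
    fun u v x huv hvx t B h => hvx t B (huv _ _ (j4_mem t B u h)),
    fun s t B w h => ?_,
    fun s t B C w hs ht =>
      w.2.mem_of_derivFrom (((ax (.a2 s t B C)).mp (hyp hs)).mp (hyp ht)),
    fun c B w h => w.2.mem_of_derivFrom (an c B h),
    j4_mem,
    fun t B w v h hwv => hwv _ _ (j4_mem t B w h)⟩
  have hor : DerivFrom false true true CS w.1 ((just s B).or (just t B)) := by
    rcases h with h | h
    · exact deduction ((neg_imp.mp hyp_insert).mp (hyp (Set.mem_insert_of_mem _ h)))
    · exact imp_intro (hyp h)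
  exact w.2.mem_of_derivFrom ((ax (.a3 s t B)).mp hor)

theorem completeness_LP_general (CS : Set Formula) (A : Formula)
    (hA : ¬ DerivS AxLP CS A) :
    ∃ M : Model, IsModelLP CS M ∧ ∃ w : M.World, ¬ Sat M A w := by
  obtain ⟨w, hw, hmax⟩ := exists_maximal_consistent_superset (consistent_singleton_neg hA)
  refine ⟨canonicalModel false true true CS ⟨w, hmax⟩, isModelLP_canonicalModel,
    ⟨w, hmax⟩, ?_⟩
  exact mt (sat_canonicalModel_iff A _).1 (hmax.neg_mem_iff.1 (hw rfl))

/-- Completeness of `LP_CS`: if a formula is not derivable in the Hilbert system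
`LP_CS` (with constant specification `CS`), then it fails at some world
of some Fitting model for `LP_CS`. -/
theorem completeness_LP (CS : Set Formula) (hCS : ConstSpec AxLP CS) (A : Formula)
    (hA : ¬ DerivS AxLP CS A) :
    ∃ M : Model, IsModelLP CS M ∧ ∃ w : M.World, ¬ Sat M A w :=
  completeness_LP_general CS A hA

end JustificationLogic
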